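/- For every real x ∈ (0,1], one has x·log_3(1/x) ≤ ω_3(x) ≤ x·log_3(3/(2x)). -/

import Mathlib

/-- Distance from `x` to the nearest integer: `‖x‖`. -/
noncomputable def nearestIntDist (x : ℝ) : ℝ := |x - (round x : ℝ)|

/-- The generalized Takagi function
`ω_m(x) = ∑_{k=0}^∞ m^{-k} ‖m^k x‖_{1/m}`, where `‖·‖_α = min{‖·‖, α}`. -/
noncomputable def omegaT (m : ℕ) (x : ℝ) : ℝ :=
  ∑' k : ℕ, ((m : ℝ) ^ k)⁻¹ * min (nearestIntDist ((m : ℝ) ^ k * x)) (1 / m)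

/-!
Both bounds `φ x = x * logb 3 (1 / x)` and `φ x = x * logb 3 (3 / (2 * x))` satisfy
`φ x = x + φ (3 * x) / 3`, and so does `ω₃` for `x ≤ 1 / 3`, where `‖x‖_{1/3} = x`. Hence it
suffices to prove the bounds on `(1 / 3, 1]`. There the lower bound already holds for the first two
terms of the series. For the upper bound, `B y = 1 / 4 + ‖y‖ / 2` satisfies
`‖y‖_{1/3} + B (3 * y) / 3 ≤ B y`, so iterating the functional equation of `ω₃` gives `ω₃ ≤ B`
everywhere, and `B x ≤ x * logb 3 (3 / (2 * x))` on `(1 / 3, 1]`.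
-/

open Real Finset

lemma nearestIntDist_nonneg (y : ℝ) : 0 ≤ nearestIntDist y := abs_nonneg _

lemma nearestIntDist_le_half (y : ℝ) : nearestIntDist y ≤ 1 / 2 := abs_sub_round y

lemma nearestIntDist_add_intCast (y : ℝ) (n : ℤ) :
    nearestIntDist (y + n) = nearestIntDist y := by
  simp only [nearestIntDist, round_add_intCast, Int.cast_add, add_sub_add_right_eq_sub]

lemma nearestIntDist_le_sub_intCast {y : ℝ} {n : ℤ} (h : n ≤ y) : nearestIntDist y ≤ y - n :=
  (round_le y n).trans_eq (abs_of_nonneg (sub_nonneg.2 h))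

lemma nearestIntDist_le_intCast_sub {y : ℝ} {n : ℤ} (h : y ≤ n) : nearestIntDist y ≤ n - y :=
  (round_le y n).trans_eq (abs_of_nonpos (sub_nonpos.2 h) |>.trans (neg_sub _ _))

lemma nearestIntDist_eq_min {y : ℝ} (n : ℤ) (h₀ : n ≤ y) (h₁ : y ≤ n + 1) :
    nearestIntDist y = min (y - n) (n + 1 - y) := by
  refine le_antisymm (le_min (nearestIntDist_le_sub_intCast h₀) ?_) ?_
  · simpa using nearestIntDist_le_intCast_sub (n := n + 1) (by push_cast; exact h₁)
  · change _ ≤ |y - round y|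
    rcases le_or_gt (round y) n with h | h
    · have : (round y : ℝ) ≤ n := by exact_mod_cast h
      exact (min_le_left _ _).trans (by linarith [le_abs_self (y - round y)])
    · have : (n : ℝ) + 1 ≤ round y := by exact_mod_cast h
      exact (min_le_right _ _).trans (by linarith [neg_abs_le (y - round y)])

section omegaT

variable {m : ℕ}

noncomputable def takagiTerm (m : ℕ) (x : ℝ) (k : ℕ) : ℝ :=
  ((m : ℝ) ^ k)⁻¹ * min (nearestIntDist ((m : ℝ) ^ k * x)) (1 / m)

lemma omegaT_eq_tsum_takagiTerm (m : ℕ) (x : ℝ) : omegaT m x = ∑' k, takagiTerm m x k := rfl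

lemma takagiTerm_nonneg (m : ℕ) (x : ℝ) (k : ℕ) : 0 ≤ takagiTerm m x k :=
  mul_nonneg (by positivity) (le_min (nearestIntDist_nonneg _) (by positivity))

lemma takagiTerm_zero (m : ℕ) (x : ℝ) : takagiTerm m x 0 = min (nearestIntDist x) (1 / m) := by
  simp [takagiTerm]

lemma takagiTerm_succ (m : ℕ) (x : ℝ) (k : ℕ) :
    takagiTerm m x (k + 1) = takagiTerm m (m * x) k / m := by
  simp only [takagiTerm, pow_succ, mul_inv, mul_assoc, div_eq_mul_inv]
  ring

lemma summable_takagiTerm (hm : 1 < m) (x : ℝ) : Summable (takagiTerm m x) := by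
  have hm' : (1 : ℝ) < m := by exact_mod_cast hm
  refine Summable.of_nonneg_of_le (takagiTerm_nonneg m x) (fun k => ?_)
    (summable_geometric_of_lt_one (by positivity) (inv_lt_one_of_one_lt₀ hm'))
  have h_inv : 1 / (m : ℝ) ≤ 1 := by rw [one_div]; exact inv_le_one_of_one_le₀ hm'.le
  calc takagiTerm m x k ≤ ((m : ℝ) ^ k)⁻¹ * 1 :=
        mul_le_mul_of_nonneg_left ((min_le_right _ _).trans h_inv) (by positivity)
    _ = (m : ℝ)⁻¹ ^ k := by rw [mul_one, inv_pow]

lemma omegaT_eq_add (hm : 1 < m) (x : ℝ) :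
    omegaT m x = min (nearestIntDist x) (1 / m) + omegaT m (m * x) / m := by
  simp only [omegaT_eq_tsum_takagiTerm, (summable_takagiTerm hm x).tsum_eq_zero_add,
    takagiTerm_zero, takagiTerm_succ, tsum_div_const]

lemma sum_takagiTerm_le_omegaT (hm : 1 < m) (x : ℝ) (N : ℕ) :
    ∑ k ∈ range N, takagiTerm m x k ≤ omegaT m x :=
  (summable_takagiTerm hm x).sum_le_tsum _ fun k _ => takagiTerm_nonneg m x k

lemma omegaT_le_of_forall_add_le {B : ℝ → ℝ} (hB₀ : ∀ y, 0 ≤ B y)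
    (hB : ∀ y, min (nearestIntDist y) (1 / m) + B (m * y) / m ≤ B y) (x : ℝ) :
    omegaT m x ≤ B x := by
  have partial_le : ∀ N y, ∑ k ∈ range N, takagiTerm m y k ≤ B y := by
    intro N
    induction N with
    | zero => simpa using hB₀
    | succ N ih =>
      intro y
      rw [sum_range_succ', takagiTerm_zero]
      simp only [takagiTerm_succ, ← sum_div]
      have := div_le_div_of_nonneg_right (ih (m * y)) (Nat.cast_nonneg m)
      linarith [hB y]
  exact Real.tsum_le_of_sum_range_le (takagiTerm_nonneg m x) (partial_le · x)

end omegaT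

lemma omegaT_three_eq_add (x : ℝ) :
    omegaT 3 x = min (nearestIntDist x) (1 / 3) + omegaT 3 (3 * x) / 3 := by
  exact_mod_cast omegaT_eq_add (m := 3) (by norm_num) x

lemma omegaT_three_eq_add_of_le {x : ℝ} (h₀ : 0 ≤ x) (h₁ : x ≤ 1 / 3) :
    omegaT 3 x = x + omegaT 3 (3 * x) / 3 := by
  have hd : nearestIntDist x = x := by
    rw [nearestIntDist_eq_min 0 (by simpa using h₀) (by simp; linarith)]
    simpa using (by linarith : x ≤ 1 - x)
  rw [omegaT_three_eq_add, hd, min_eq_left h₁]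

lemma min_nearestIntDist_add_le_of_mem_Icc {t : ℝ} (h₀ : 0 ≤ t) (h₁ : t ≤ 1) :
    min (nearestIntDist t) (1 / 3) + (1 / 4 + nearestIntDist (3 * t) / 2) / 3 ≤
      1 / 4 + nearestIntDist t / 2 := by
  have h₃ := nearestIntDist_le_half (3 * t)
  have h₄ : 1 ≤ 3 * t → nearestIntDist (3 * t) ≤ 3 * t - 1 := by
    simpa using nearestIntDist_le_sub_intCast (y := 3 * t) (n := 1)
  have h₅ : 3 * t ≤ 1 → nearestIntDist (3 * t) ≤ 1 - 3 * t := by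
    simpa using nearestIntDist_le_intCast_sub (y := 3 * t) (n := 1)
  have h₆ : 2 ≤ 3 * t → nearestIntDist (3 * t) ≤ 3 * t - 2 := by
    simpa using nearestIntDist_le_sub_intCast (y := 3 * t) (n := 2)
  have h₇ : 3 * t ≤ 2 → nearestIntDist (3 * t) ≤ 2 - 3 * t := by
    simpa using nearestIntDist_le_intCast_sub (y := 3 * t) (n := 2)
  rw [nearestIntDist_eq_min 0 (by simpa using h₀) (by simpa using h₁), Int.cast_zero, sub_zero,
    zero_add]
  rcases le_total t (1 / 2) with h | h
  · rw [min_eq_left (by linarith : t ≤ 1 - t)]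
    rcases le_total t (1 / 6) with h' | h'
    · linarith [min_le_left t (1 / 3)]
    rcases le_total t (1 / 3) with h'' | h''
    · linarith [min_le_left t (1 / 3), h₅ (by linarith)]
    · linarith [min_le_right t (1 / 3), h₄ (by linarith)]
  · rw [min_eq_right (by linarith : 1 - t ≤ t)]
    rcases le_total (5 / 6) t with h' | h'
    · linarith [min_le_left (1 - t) (1 / 3)]
    rcases le_total t (2 / 3) with h'' | h''
    · linarith [min_le_right (1 - t) (1 / 3), h₇ (by linarith)]
    · linarith [min_le_left (1 - t) (1 / 3), h₆ (by linarith)]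

lemma min_nearestIntDist_add_le (y : ℝ) :
    min (nearestIntDist y) (1 / 3) + (1 / 4 + nearestIntDist (3 * y) / 2) / 3 ≤
      1 / 4 + nearestIntDist y / 2 := by
  have h₁ : nearestIntDist y = nearestIntDist (Int.fract y) := by
    rw [← nearestIntDist_add_intCast (Int.fract y) ⌊y⌋, Int.fract_add_floor]
  have h₃ : nearestIntDist (3 * y) = nearestIntDist (3 * Int.fract y) := by
    rw [← nearestIntDist_add_intCast (3 * Int.fract y) (3 * ⌊y⌋), ← Int.self_sub_floor]
    push_cast
    ring_nf
  rw [h₁, h₃]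
  exact min_nearestIntDist_add_le_of_mem_Icc (Int.fract_nonneg y) (Int.fract_lt_one y).le

lemma omegaT_three_le (y : ℝ) : omegaT 3 y ≤ 1 / 4 + nearestIntDist y / 2 := by
  refine omegaT_le_of_forall_add_le (m := 3) (B := fun z => 1 / 4 + nearestIntDist z / 2)
    (fun z => ?_) (fun z => ?_) y
  · linarith [nearestIntDist_nonneg z]
  · exact_mod_cast min_nearestIntDist_add_le z

lemma min_le_omegaT_three {x : ℝ} (h₀ : 1 / 3 ≤ x) (h₁ : x ≤ 1) :
    min (min x (4 / 9)) (1 - x) ≤ omegaT 3 x := by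
  have h₂ : min (nearestIntDist x) (1 / 3) + min (nearestIntDist (3 * x)) (1 / 3) / 3 ≤
      omegaT 3 x := by
    have := sum_takagiTerm_le_omegaT (m := 3) (by norm_num) x 2
    norm_num [sum_range_succ, takagiTerm] at this ⊢
    linarith
  refine le_trans ?_ h₂
  rw [nearestIntDist_eq_min 0 (by simp; linarith) (by simpa using h₁)]
  rcases le_total x (2 / 3) with h | h
  · rw [nearestIntDist_eq_min 1 (by push_cast; linarith) (by push_cast; linarith)]
    push_cast
    simp only [min_def]
    split_ifs <;> linarith
  · rw [nearestIntDist_eq_min 2 (by push_cast; linarith) (by push_cast; linarith)]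
    push_cast
    simp only [min_def]
    split_ifs <;> linarith

lemma one_le_log_three : 1 ≤ log 3 :=
  (le_log_iff_exp_le (by norm_num)).2 (exp_one_lt_d9.le.trans (by norm_num))

lemma log_three_lt : log 3 < 4 / 3 := by
  rw [log_lt_iff_lt_exp (by norm_num)]
  linarith [quadratic_le_exp_of_nonneg (by norm_num : (0 : ℝ) ≤ 4 / 3)]

lemma log_le_sub_inv_div_two {u : ℝ} (hu : 1 ≤ u) : log u ≤ (u - u⁻¹) / 2 := by
  have h := self_le_sinh_iff.2 (log_nonneg hu)
  rwa [sinh_eq, exp_neg, exp_log (by linarith)] at h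

lemma neg_inv_exp_le_mul_log {x : ℝ} (hx : 0 < x) : -(exp 1)⁻¹ ≤ x * log x := by
  have he := exp_pos 1
  have h := self_sub_one_le_mul_log (x := exp 1 * x) (by positivity)
  rw [log_mul he.ne' hx.ne', log_exp] at h
  rw [neg_le_iff_add_nonneg, ← mul_nonneg_iff_of_pos_left he, mul_add, mul_inv_cancel₀ he.ne']
  linarith

lemma mul_logb_eq_add_mul_logb_div {b y : ℝ} (hb : 1 < b) (hy : y ≠ 0) (x : ℝ) :
    x * logb b y = x + b * x * logb b (y / b) / b := by
  rw [logb_div hy (by positivity), logb_self_eq_one hb]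
  field_simp
  ring

lemma mul_logb_three_one_div_le {x : ℝ} (h₀ : 1 / 3 ≤ x) (h₁ : x ≤ 1) :
    x * logb 3 (1 / x) ≤ min (min x (4 / 9)) (1 - x) := by
  have hx : 0 < x := by linarith
  have hL := one_le_log_three
  have hf : x * logb 3 (1 / x) = -(x * log x) / log 3 := by
    rw [logb, one_div, log_inv]
    ring
  rw [hf]
  refine le_min (le_min ?_ ?_) ?_ <;> rw [div_le_iff₀ (by linarith)]
  · have : -log x ≤ log 3 := by
      rw [← log_inv]
      exact log_le_log (by positivity) (by rw [inv_le_comm₀ hx (by norm_num)]; linarith)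
    nlinarith
  · have h₂ := neg_inv_exp_le_mul_log hx
    have h₃ : (exp 1)⁻¹ ≤ 4 / 9 := by
      rw [inv_le_comm₀ (exp_pos 1) (by norm_num)]
      linarith [exp_one_gt_d9]
    nlinarith
  · have h₂ := negMulLog_le_one_sub_self hx.le
    rw [negMulLog, neg_mul] at h₂
    nlinarith

lemma quarter_add_nearestIntDist_le_mul_logb_three {x : ℝ} (h₀ : 1 / 3 ≤ x) (h₁ : x ≤ 1) :
    1 / 4 + nearestIntDist x / 2 ≤ x * logb 3 (3 / (2 * x)) := by
  have hx : 0 < x := by linarith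
  have hL := one_le_log_three
  have hg : x * logb 3 (3 / (2 * x)) = x - x * log (2 * x) / log 3 := by
    rw [logb, log_div (by norm_num) (by positivity)]
    field_simp
  rw [hg, nearestIntDist_eq_min 0 (by simpa using hx.le) (by simpa using h₁), Int.cast_zero,
    sub_zero, zero_add, le_sub_comm, div_le_iff₀ (by linarith)]
  rcases le_total x (1 / 2) with h | h
  · rw [min_eq_left (by linarith)]
    have h₂ := log_le_sub_one_of_pos (by positivity : 0 < 2 * x)
    nlinarith [log_three_lt, mul_le_mul_of_nonneg_left h₂ hx.le]
  · rw [min_eq_right (by linarith)]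
    have h₂ := log_le_sub_inv_div_two (by linarith : 1 ≤ 2 * x)
    have h₃ : x * ((2 * x - (2 * x)⁻¹) / 2) = x ^ 2 - 1 / 4 := by
      field_simp
      ring
    nlinarith [mul_le_mul_of_nonneg_left h₂ hx.le]

lemma forall_mem_Ioc_zero_one_of_mul {b : ℝ} (hb : 1 < b) {P : ℝ → Prop}
    (base : ∀ x ∈ Set.Ioc b⁻¹ 1, P x) (step : ∀ x ∈ Set.Ioc 0 b⁻¹, P (b * x) → P x) :
    ∀ x ∈ Set.Ioc 0 1, P x := by
  have hb₀ : 0 < b := by linarith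
  have key : ∀ n : ℕ, ∀ x ∈ Set.Ioc (0 : ℝ) 1, b⁻¹ < b ^ n * x → P x := by
    intro n
    induction n with
    | zero => exact fun x hx h => base x ⟨by simpa using h, hx.2⟩
    | succ n ih =>
      intro x ⟨hx₀, hx₁⟩ h
      rcases lt_or_ge b⁻¹ x with h' | h'
      · exact base x ⟨h', hx₁⟩
      refine step x ⟨hx₀, h'⟩ (ih (b * x) ⟨by positivity, ?_⟩ (by rwa [pow_succ, mul_assoc] at h))
      calc b * x ≤ b * b⁻¹ := by gcongr
        _ = 1 := mul_inv_cancel₀ hb₀.ne'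
  intro x hx
  obtain ⟨n, hn⟩ := pow_unbounded_of_one_lt (b⁻¹ / x) hb
  exact key n x hx (by rwa [div_lt_iff₀ hx.1] at hn)

theorem stmt19 {x : ℝ} (hx : x ∈ Set.Ioc (0 : ℝ) 1) :
    x * Real.logb 3 (1 / x) ≤ omegaT 3 x ∧
    omegaT 3 x ≤ x * Real.logb 3 (3 / (2 * x)) := by
  refine forall_mem_Ioc_zero_one_of_mul (b := 3) (by norm_num)
    (P := fun y => y * logb 3 (1 / y) ≤ omegaT 3 y ∧ omegaT 3 y ≤ y * logb 3 (3 / (2 * y)))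
    (fun y ⟨h₀, h₁⟩ => ?_) (fun y ⟨h₀, h₁⟩ ih => ?_) x hx
  · rw [← one_div] at h₀
    exact ⟨(mul_logb_three_one_div_le h₀.le h₁).trans (min_le_omegaT_three h₀.le h₁),
      (omegaT_three_le y).trans (quarter_add_nearestIntDist_le_mul_logb_three h₀.le h₁)⟩
  · rw [← one_div] at h₁
    rw [omegaT_three_eq_add_of_le h₀.le h₁,
      mul_logb_eq_add_mul_logb_div (by norm_num) (by positivity : 1 / y ≠ 0),
      mul_logb_eq_add_mul_logb_div (by norm_num) (by positivity : 3 / (2 * y) ≠ 0),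
      show 1 / y / 3 = 1 / (3 * y) by ring, show 3 / (2 * y) / 3 = 3 / (2 * (3 * y)) by ring]
    constructor <;> linarith [ih.1, ih.2]
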